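/- Let φ be a formula generated by the grammar φ ::= tt | ⟨a⟩φ | φ∧φ | φ∨φ, and let ⋁_{i=1}^k φ_i be the DNF of φ. Then φ is prime in L_S if and only if for every pair of indices 1 ≤ i, j ≤ k there is some 1 ≤ m ≤ k such that φ_i entails φ_m and φ_j entails φ_m. -/

import Mathlib

/-- Finite, loop-free CCS processes over the action set `Act`:
`p ::= 0 | a.p | p + p`. -/
inductive Proc (Act : Type) : Type
  | nil : Proc Act
  | pre : Act → Proc Act → Proc Act
  | plus : Proc Act → Proc Act → Proc Act

/-- The transition relation: `a.p —a→ p`, and `p₁ + p₂ —a→ p'` iff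
`p₁ —a→ p'` or `p₂ —a→ p'`. -/
inductive Step {Act : Type} : Proc Act → Act → Proc Act → Prop
  | pre (a : Act) (p : Proc Act) : Step (Proc.pre a p) a p
  | plusL : ∀ {p₁ p₂ p' : Proc Act} {a : Act},
      Step p₁ a p' → Step (Proc.plus p₁ p₂) a p'
  | plusR : ∀ {p₁ p₂ p' : Proc Act} {a : Act},
      Step p₂ a p' → Step (Proc.plus p₁ p₂) a p'

/-- HML formulas in negation normal form:
`φ ::= tt | ff | φ∧φ | φ∨φ | ⟨a⟩φ | [a]φ`. -/
inductive HML (Act : Type) : Type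
  | tt : HML Act
  | ff : HML Act
  | conj : HML Act → HML Act → HML Act
  | disj : HML Act → HML Act → HML Act
  | dia : Act → HML Act → HML Act
  | box : Act → HML Act → HML Act

/-- The satisfaction relation `p ⊨ φ`. -/
def Sat {Act : Type} : Proc Act → HML Act → Prop
  | _, HML.tt => True
  | _, HML.ff => False
  | p, HML.conj φ ψ => Sat p φ ∧ Sat p ψ
  | p, HML.disj φ ψ => Sat p φ ∨ Sat p ψ
  | p, HML.dia a φ => ∃ p', Step p a p' ∧ Sat p' φ
  | p, HML.box a φ => ∀ p', Step p a p' → Sat p' φ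

/-- `φ` entails `ψ` iff every process satisfying `φ` satisfies `ψ`. -/
def Entails {Act : Type} (φ ψ : HML Act) : Prop :=
  ∀ p : Proc Act, Sat p φ → Sat p ψ

/-- `R` is a simulation relation. -/
def IsSimulation {Act : Type} (R : Proc Act → Proc Act → Prop) : Prop :=
  ∀ p q, R p q → ∀ a p', Step p a p' → ∃ q', Step q a q' ∧ R p' q'

/-- The simulation preorder `≲_S`: the largest simulation. -/
def Sim {Act : Type} (p q : Proc Act) : Prop :=
  ∃ R, IsSimulation R ∧ R p q

/-- The set `I(p)` of initial actions of a process. -/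
def initials {Act : Type} (p : Proc Act) : Set Act :=
  {a | ∃ p', Step p a p'}

/-- The fragment `L_S`: `φ ::= tt | ff | φ∧φ | φ∨φ | ⟨a⟩φ`. -/
inductive InLS {Act : Type} : HML Act → Prop
  | tt : InLS HML.tt
  | ff : InLS HML.ff
  | conj : ∀ {φ ψ : HML Act}, InLS φ → InLS ψ → InLS (HML.conj φ ψ)
  | disj : ∀ {φ ψ : HML Act}, InLS φ → InLS ψ → InLS (HML.disj φ ψ)
  | dia : ∀ {a : Act} {φ : HML Act}, InLS φ → InLS (HML.dia a φ)

/-- Formulas generated by the grammar `φ ::= tt | ⟨a⟩φ | φ∧φ | φ∨φ`. -/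
inductive InPos {Act : Type} : HML Act → Prop
  | tt : InPos HML.tt
  | dia : ∀ {a : Act} {φ : HML Act}, InPos φ → InPos (HML.dia a φ)
  | conj : ∀ {φ ψ : HML Act}, InPos φ → InPos ψ → InPos (HML.conj φ ψ)
  | disj : ∀ {φ ψ : HML Act}, InPos φ → InPos ψ → InPos (HML.disj φ ψ)

/-- The list of disjunction-free disjuncts of the disjunctive normal form,
obtained by rewriting `⟨a⟩(ψ₁∨ψ₂)` to `⟨a⟩ψ₁ ∨ ⟨a⟩ψ₂` and distributing
conjunctions over disjunctions. -/
def dnfList {Act : Type} : HML Act → List (HML Act)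
  | HML.tt => [HML.tt]
  | HML.ff => [HML.ff]
  | HML.conj φ ψ =>
      (dnfList φ).foldr (fun f acc => ((dnfList ψ).map (fun g => HML.conj f g)) ++ acc) []
  | HML.disj φ ψ => dnfList φ ++ dnfList ψ
  | HML.dia a φ => (dnfList φ).map (fun f => HML.dia a f)
  | HML.box a φ => [HML.box a φ]

/-- `φ` is prime in the fragment `L`: whenever `φ` entails a disjunction of
`L`-formulas, it entails one of the disjuncts. -/
def PrimeIn {Act : Type} (L : HML Act → Prop) (φ : HML Act) : Prop :=
  ∀ φ₁ φ₂ : HML Act, L φ₁ → L φ₂ → Entails φ (HML.disj φ₁ φ₂) →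
    Entails φ φ₁ ∨ Entails φ φ₂

/-!
Each disjunct `ψ` of the DNF is a conjunction of diamonds and has a characteristic process
`charProc ψ`: a process satisfies `ψ` iff it simulates `charProc ψ`. Since `L_S`-formulas are
preserved by simulation, `ψ` entails an `L_S`-formula `χ` iff `charProc ψ ⊨ χ`, so every disjunct
is prime. If `φ` is prime, then it entails one disjunct of its own DNF, which is then above all
disjuncts. Conversely, if `φ ⊨ χ₁ ∨ χ₂` but `φ` entails neither, pick disjuncts `ψ₁ ⊭ χ₁` and
`ψ₂ ⊭ χ₂`; a common upper bound `ψₘ` of both is prime and entails `χ₁ ∨ χ₂`, a contradiction.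
-/

section

variable {Act : Type}

theorem Entails.refl (φ : HML Act) : Entails φ φ := fun _ hp => hp

theorem Entails.trans {φ ψ χ : HML Act} (h₁ : Entails φ ψ) (h₂ : Entails ψ χ) :
    Entails φ χ :=
  fun p hp => h₂ p (h₁ p hp)

namespace Sim

theorem step {p q : Proc Act} (h : Sim p q) {a : Act} {p' : Proc Act} (hs : Step p a p') :
    ∃ q', Step q a q' ∧ Sim p' q' := by
  obtain ⟨R, hR, hpq⟩ := h
  obtain ⟨q', hq, hR'⟩ := hR p q hpq a p' hs
  exact ⟨q', hq, R, hR, hR'⟩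

theorem of_forall_step {p q : Proc Act}
    (h : ∀ a p', Step p a p' → ∃ q', Step q a q' ∧ Sim p' q') : Sim p q := by
  refine ⟨fun x y => (x = p ∧ y = q) ∨ Sim x y, ?_, Or.inl ⟨rfl, rfl⟩⟩
  rintro x y (⟨rfl, rfl⟩ | hxy) a x' hs
  · obtain ⟨y', hy, hsim⟩ := h a x' hs
    exact ⟨y', hy, Or.inr hsim⟩
  · obtain ⟨y', hy, hsim⟩ := hxy.step hs
    exact ⟨y', hy, Or.inr hsim⟩

theorem refl (p : Proc Act) : Sim p p :=
  ⟨Eq, by rintro x _ rfl a x' hs; exact ⟨x', hs, rfl⟩, rfl⟩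

theorem nil (q : Proc Act) : Sim Proc.nil q :=
  of_forall_step fun _ _ hs => nomatch hs

theorem pre {a : Act} {p q q' : Proc Act} (hs : Step q a q') (h : Sim p q') :
    Sim (Proc.pre a p) q :=
  of_forall_step fun _ _ hp => by cases hp; exact ⟨q', hs, h⟩

theorem plus {p₁ p₂ q : Proc Act} (h₁ : Sim p₁ q) (h₂ : Sim p₂ q) :
    Sim (Proc.plus p₁ p₂) q :=
  of_forall_step fun _ _ hs => by
    cases hs with
    | plusL hs => exact h₁.step hs
    | plusR hs => exact h₂.step hs

theorem le_plus_left (p q : Proc Act) : Sim p (Proc.plus p q) :=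
  of_forall_step fun _ p' hs => ⟨p', Step.plusL hs, refl p'⟩

theorem le_plus_right (p q : Proc Act) : Sim q (Proc.plus p q) :=
  of_forall_step fun _ q' hs => ⟨q', Step.plusR hs, refl q'⟩

end Sim

theorem InLS.sat_of_sim {χ : HML Act} (hχ : InLS χ) {p q : Proc Act} (hpq : Sim p q)
    (hp : Sat p χ) : Sat q χ := by
  induction hχ generalizing p q with
  | tt => trivial
  | ff => exact hp
  | conj _ _ ih₁ ih₂ => exact ⟨ih₁ hpq hp.1, ih₂ hpq hp.2⟩
  | disj _ _ ih₁ ih₂ => exact hp.imp (ih₁ hpq) (ih₂ hpq)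
  | dia _ ih =>
    obtain ⟨p', hs, hp'⟩ := hp
    obtain ⟨q', hq, hsim⟩ := hpq.step hs
    exact ⟨q', hq, ih hsim hp'⟩

theorem InPos.inLS {φ : HML Act} (h : InPos φ) : InLS φ := by
  induction h with
  | tt => exact InLS.tt
  | dia _ ih => exact InLS.dia ih
  | conj _ _ ih₁ ih₂ => exact InLS.conj ih₁ ih₂
  | disj _ _ ih₁ ih₂ => exact InLS.disj ih₁ ih₂

theorem InPos.exists_sat {φ : HML Act} (h : InPos φ) : ∃ p, Sat p φ := by
  induction h with
  | tt => exact ⟨Proc.nil, trivial⟩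
  | dia _ ih =>
    obtain ⟨p, hp⟩ := ih
    exact ⟨Proc.pre _ p, p, Step.pre _ _, hp⟩
  | conj h₁ h₂ ih₁ ih₂ =>
    obtain ⟨p₁, hp₁⟩ := ih₁
    obtain ⟨p₂, hp₂⟩ := ih₂
    exact ⟨Proc.plus p₁ p₂, h₁.inLS.sat_of_sim (Sim.le_plus_left _ _) hp₁,
      h₂.inLS.sat_of_sim (Sim.le_plus_right _ _) hp₂⟩
  | disj _ _ ih₁ _ =>
    obtain ⟨p, hp⟩ := ih₁
    exact ⟨p, Or.inl hp⟩

inductive InPosDisjFree : HML Act → Prop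
  | tt : InPosDisjFree HML.tt
  | dia : ∀ {a : Act} {φ : HML Act}, InPosDisjFree φ → InPosDisjFree (HML.dia a φ)
  | conj : ∀ {φ ψ : HML Act}, InPosDisjFree φ → InPosDisjFree ψ → InPosDisjFree (HML.conj φ ψ)

theorem InPosDisjFree.inLS {ψ : HML Act} (h : InPosDisjFree ψ) : InLS ψ := by
  induction h with
  | tt => exact InLS.tt
  | dia _ ih => exact InLS.dia ih
  | conj _ _ ih₁ ih₂ => exact InLS.conj ih₁ ih₂

def charProc : HML Act → Proc Act
  | HML.conj φ ψ => Proc.plus (charProc φ) (charProc ψ)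
  | HML.dia a φ => Proc.pre a (charProc φ)
  | _ => Proc.nil

namespace InPosDisjFree

variable {ψ : HML Act}

theorem sat_charProc (h : InPosDisjFree ψ) : Sat (charProc ψ) ψ := by
  induction h with
  | tt => trivial
  | dia _ ih => exact ⟨_, Step.pre _ _, ih⟩
  | conj h₁ h₂ ih₁ ih₂ =>
    exact ⟨h₁.inLS.sat_of_sim (Sim.le_plus_left _ _) ih₁,
      h₂.inLS.sat_of_sim (Sim.le_plus_right _ _) ih₂⟩

theorem sim_charProc_of_sat (h : InPosDisjFree ψ) {q : Proc Act} (hq : Sat q ψ) :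
    Sim (charProc ψ) q := by
  induction h generalizing q with
  | tt => exact Sim.nil q
  | dia _ ih =>
    obtain ⟨q', hs, hq'⟩ := hq
    exact Sim.pre hs (ih hq')
  | conj _ _ ih₁ ih₂ => exact Sim.plus (ih₁ hq.1) (ih₂ hq.2)

theorem entails_iff_sat_charProc (h : InPosDisjFree ψ) {χ : HML Act} (hχ : InLS χ) :
    Entails ψ χ ↔ Sat (charProc ψ) χ :=
  ⟨fun hent => hent _ h.sat_charProc,
    fun hc _ hq => hχ.sat_of_sim (h.sim_charProc_of_sat hq) hc⟩

theorem primeIn (h : InPosDisjFree ψ) : PrimeIn InLS ψ := by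
  intro χ₁ χ₂ hχ₁ hχ₂ hent
  rw [h.entails_iff_sat_charProc hχ₁, h.entails_iff_sat_charProc hχ₂]
  exact hent _ h.sat_charProc

end InPosDisjFree

theorem sat_iff_exists_mem_dnfList (φ : HML Act) (p : Proc Act) :
    Sat p φ ↔ ∃ ψ ∈ dnfList φ, Sat p ψ := by
  induction φ generalizing p with
  | disj φ₁ φ₂ ih₁ ih₂ => simp [Sat, dnfList, ih₁, ih₂, or_and_right, exists_or]
  | conj φ₁ φ₂ ih₁ ih₂ =>
    simp only [Sat, ih₁, ih₂, dnfList, List.foldr_append_eq_append, List.append_nil,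
      List.mem_flatten, List.mem_map, exists_exists_and_eq_and,
      exists_exists_and_exists_and_eq_and]
    grind
  | dia a φ ih =>
    simp only [Sat, ih, dnfList, List.mem_map, exists_exists_and_eq_and]
    grind
  | _ => simp [dnfList]

theorem InPos.inPosDisjFree_of_mem_dnfList {φ : HML Act} (h : InPos φ) :
    ∀ ψ ∈ dnfList φ, InPosDisjFree ψ := by
  induction h with
  | tt => simpa [dnfList] using InPosDisjFree.tt
  | dia _ ih => simpa [dnfList] using fun ψ hψ => (ih ψ hψ).dia
  | conj _ _ ih₁ ih₂ =>
    intro ψ hψ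
    obtain ⟨ψ₁, h₁, ψ₂, h₂, rfl⟩ : ∃ ψ₁ ∈ dnfList _, ∃ ψ₂ ∈ dnfList _, HML.conj ψ₁ ψ₂ = ψ := by
      simpa [dnfList] using hψ
    exact (ih₁ ψ₁ h₁).conj (ih₂ ψ₂ h₂)
  | disj _ _ ih₁ ih₂ => simpa [dnfList, or_imp, forall_and] using ⟨ih₁, ih₂⟩

theorem entails_iff_forall_mem_dnfList {φ χ : HML Act} :
    Entails φ χ ↔ ∀ ψ ∈ dnfList φ, Entails ψ χ := by
  simp only [Entails, sat_iff_exists_mem_dnfList φ]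
  grind

theorem entails_of_mem_dnfList {φ ψ : HML Act} (hψ : ψ ∈ dnfList φ) : Entails ψ φ :=
  entails_iff_forall_mem_dnfList.mp (Entails.refl φ) ψ hψ

def disjList : List (HML Act) → HML Act
  | [] => HML.ff
  | ψ :: l => HML.disj ψ (disjList l)

theorem sat_disjList {l : List (HML Act)} {p : Proc Act} :
    Sat p (disjList l) ↔ ∃ ψ ∈ l, Sat p ψ := by
  induction l with
  | nil => simp [disjList, Sat]
  | cons ψ l ih => simp [disjList, Sat, ih]

theorem InLS.disjList {l : List (HML Act)} (h : ∀ ψ ∈ l, InLS ψ) : InLS (disjList l) := by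
  induction l with
  | nil => exact InLS.ff
  | cons ψ l ih => exact InLS.disj (h ψ List.mem_cons_self) (ih fun χ hχ => h χ (.tail _ hχ))

theorem PrimeIn.exists_entails_of_entails_disjList {φ : HML Act} (hφ : PrimeIn InLS φ)
    (hsat : ∃ p, Sat p φ) {l : List (HML Act)} (hl : ∀ ψ ∈ l, InLS ψ)
    (hent : Entails φ (disjList l)) : ∃ ψ ∈ l, Entails φ ψ := by
  induction l with
  | nil =>
    obtain ⟨p, hp⟩ := hsat
    exact (hent p hp).elim
  | cons ψ l ih =>
    have hl' : ∀ χ ∈ l, InLS χ := fun χ hχ => hl χ (.tail _ hχ)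
    rcases hφ ψ (disjList l) (hl ψ List.mem_cons_self) (InLS.disjList hl') hent with hψ | hrest
    · exact ⟨ψ, List.mem_cons_self, hψ⟩
    · obtain ⟨χ, hχ, hent'⟩ := ih hl' hrest
      exact ⟨χ, .tail _ hχ, hent'⟩

end

theorem prime_iff_pairs_common_disjunct_general {Act : Type}
    (φ : HML Act) (h : InPos φ) :
    PrimeIn InLS φ ↔
      ∀ ψ₁ ∈ dnfList φ, ∀ ψ₂ ∈ dnfList φ,
        ∃ ψₘ ∈ dnfList φ, Entails ψ₁ ψₘ ∧ Entails ψ₂ ψₘ := by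
  have hdisjFree := h.inPosDisjFree_of_mem_dnfList
  constructor
  · intro hφ ψ₁ h₁ ψ₂ h₂
    have hent : Entails φ (disjList (dnfList φ)) := fun p hp =>
      sat_disjList.mpr ((sat_iff_exists_mem_dnfList φ p).mp hp)
    obtain ⟨ψₘ, hₘ, hφₘ⟩ := hφ.exists_entails_of_entails_disjList h.exists_sat
      (fun ψ hψ => (hdisjFree ψ hψ).inLS) hent
    exact ⟨ψₘ, hₘ, (entails_of_mem_dnfList h₁).trans hφₘ, (entails_of_mem_dnfList h₂).trans hφₘ⟩
  · intro hpair χ₁ χ₂ hχ₁ hχ₂ hent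
    by_contra! hnot
    simp only [entails_iff_forall_mem_dnfList (φ := φ), not_forall] at hent hnot
    obtain ⟨⟨ψ₁, h₁, hψ₁⟩, ⟨ψ₂, h₂, hψ₂⟩⟩ := hnot
    obtain ⟨ψₘ, hₘ, h₁ₘ, h₂ₘ⟩ := hpair ψ₁ h₁ ψ₂ h₂
    rcases (hdisjFree ψₘ hₘ).primeIn χ₁ χ₂ hχ₁ hχ₂ (hent ψₘ hₘ) with hₘ₁ | hₘ₂
    · exact hψ₁ (h₁ₘ.trans hₘ₁)
    · exact hψ₂ (h₂ₘ.trans hₘ₂)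

/-- Let `φ` be generated by `φ ::= tt | ⟨a⟩φ | φ∧φ | φ∨φ` with DNF
`⋁_{i=1}^k φ_i`. Then `φ` is prime in `L_S` iff for every pair `i, j` there is
some `m` such that `φ_i` entails `φ_m` and `φ_j` entails `φ_m`. -/
theorem prime_iff_pairs_common_disjunct {Act : Type} [Fintype Act] [Nonempty Act]
    (φ : HML Act) (h : InPos φ) :
    PrimeIn InLS φ ↔
      ∀ ψ₁ ∈ dnfList φ, ∀ ψ₂ ∈ dnfList φ,
        ∃ ψₘ ∈ dnfList φ, Entails ψ₁ ψₘ ∧ Entails ψ₂ ψₘ :=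
  prime_iff_pairs_common_disjunct_general φ h
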